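/- The von Dyck group G₀(2,4,4), i.e. the presented group ⟨x, y, z ∣ x² = y⁴ = z⁴ = xyz = 1⟩ (the quotient of the free group on three generators x, y, z by the normal closure of the relators x², y⁴, z⁴, xyz), has Grossman's Property A. -/

import Mathlib

/-- A group `G` has Grossman's Property A if every class-preserving automorphism
(i.e. one sending each element to a conjugate of itself) is inner. -/
def HasPropertyA (G : Type*) [Group G] : Prop :=
  ∀ φ : G ≃* G, (∀ g : G, IsConj g (φ g)) → ∃ h : G, ∀ g : G, φ g = h * g * h⁻¹

/-- The relators of the von Dyck group `G₀(p,q,r) = ⟨x, y, z ∣ xᵖ = y^q = z^r = xyz = 1⟩`. -/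
def vonDyckRels (p q r : ℕ) : Set (FreeGroup (Fin 3)) :=
  {(FreeGroup.of 0) ^ p, (FreeGroup.of 1) ^ q, (FreeGroup.of 2) ^ r,
    FreeGroup.of 0 * FreeGroup.of 1 * FreeGroup.of 2}

/-!
`G₀(2,4,4)` is the wallpaper group `p4 = ℤ² ⋊ ℤ/4`: `y` acts as a quarter turn and `t = z y⁻¹` is a
unit translation. In a semidirect product `N ⋊ Q` of abelian groups, conjugating an element of `N`
by `h = (u, s)` only depends on `s`, and conjugating an element of `Q` only depends on `u`. So if a
class-preserving automorphism sends `t` to its conjugate by `(u₁, s₁)` and `y` to its conjugate by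
`(u₂, s₂)`, it agrees with conjugation by `(u₂, s₁)` on the generators `t` and `y`, hence
everywhere.
-/

open Multiplicative SemidirectProduct

theorem HasPropertyA.of_mulEquiv {G H : Type*} [Group G] [Group H] (hG : HasPropertyA G)
    (e : G ≃* H) : HasPropertyA H := by
  intro φ hφ
  obtain ⟨h, hh⟩ := hG (e.trans (φ.trans e.symm)) fun g => by
    simpa using (e.symm : H →* G).map_isConj (hφ (e g))
  refine ⟨e h, fun k => ?_⟩
  simpa using congrArg e (hh (e.symm k))

namespace SemidirectProduct

theorem mul_inl_mul_inv {N G : Type*} [CommGroup N] [Group G] {φ : G →* MulAut N}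
    (x : N ⋊[φ] G) (n : N) : x * inl n * x⁻¹ = inl (φ x.right n) := by
  ext <;> simp [mul_comm]

theorem mul_inr_mul_inv {N G : Type*} [Group N] [CommGroup G] {φ : G →* MulAut N}
    (x : N ⋊[φ] G) (g : G) : x * inr g * x⁻¹ = inl (x.left * (φ g x.left)⁻¹) * inr g := by
  ext <;> simp [mul_comm]

theorem hasPropertyA_of_closure_eq_top {N G : Type*} [CommGroup N] [CommGroup G]
    {φ : G →* MulAut N} (n : N) (g : G)
    (hgen : Subgroup.closure {inl n, inr g} = (⊤ : Subgroup (N ⋊[φ] G))) :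
    HasPropertyA (N ⋊[φ] G) := by
  intro ψ hψ
  obtain ⟨c, hc⟩ := isConj_iff.1 (hψ (inl n))
  obtain ⟨d, hd⟩ := isConj_iff.1 (hψ (inr g))
  refine ⟨⟨d.left, c.right⟩, fun x => ?_⟩
  have : (ψ : N ⋊[φ] G →* N ⋊[φ] G) = MulAut.conj (⟨d.left, c.right⟩ : N ⋊[φ] G) := by
    refine MonoidHom.eq_of_eqOn_dense hgen ?_
    rintro _ (rfl | rfl)
    · simp [← hc, mul_inl_mul_inv]
    · simp [← hd, mul_inr_mul_inv]
  exact DFunLike.congr_fun this x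

end SemidirectProduct

def zmodPowersHom {M : Type*} [Monoid M] (n : ℕ) [NeZero n] (g : M) (hg : g ^ n = 1) :
    Multiplicative (ZMod n) →* M where
  toFun s := g ^ (toAdd s).val
  map_one' := by simp
  map_mul' a b := by
    rw [toAdd_mul, ZMod.val_add, ← pow_eq_pow_mod _ hg, pow_add]

theorem zmodPowersHom_apply {M : Type*} [Monoid M] (n : ℕ) [NeZero n] (g : M) (hg : g ^ n = 1)
    (s : Multiplicative (ZMod n)) : zmodPowersHom n g hg s = g ^ (toAdd s).val := rfl

def Commute.zpowersHom {G : Type*} [Group G] {a b : G} (h : Commute a b) :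
    Multiplicative (ℤ × ℤ) →* G :=
  ((_root_.zpowersHom G a).noncommCoprod (_root_.zpowersHom G b) fun _ _ => h.zpow_zpow _ _).comp
    (MulEquiv.prodMultiplicative ℤ ℤ).toMonoidHom

theorem Commute.zpowersHom_ofAdd {G : Type*} [Group G] {a b : G} (h : Commute a b) (m n : ℤ) :
    h.zpowersHom (ofAdd (m, n)) = a ^ m * b ^ n := rfl

section FourthPowers

variable {G : Type*} [Group G] {t y : G}

theorem conj_conj_eq_inv_of_pow_four (hy : y ^ 4 = 1) (hyty : (y * t * y) ^ 2 = 1) :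
    y * (y * t * y⁻¹) * y⁻¹ = t⁻¹ := by
  have hy2 : y⁻¹ * y⁻¹ = y * y := by
    rw [inv_mul_eq_iff_eq_mul, inv_eq_iff_mul_eq_one, ← hy]
    simp only [pow_succ, pow_zero, one_mul, mul_assoc]
  rw [eq_inv_iff_mul_eq_one]
  calc y * (y * t * y⁻¹) * y⁻¹ * t = y * y * t * (y⁻¹ * y⁻¹) * t := by group
    _ = y * (y * t * y) ^ 2 * y⁻¹ := by rw [hy2, sq]; group
    _ = 1 := by rw [hyty]; group

theorem commute_conj_of_pow_four (hy : y ^ 4 = 1) (hty : (t * y) ^ 4 = 1)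
    (hyty : (y * t * y) ^ 2 = 1) : Commute t (y * t * y⁻¹) := by
  have hinv := conj_conj_eq_inv_of_pow_four hy hyty
  -- `(t * y) ^ 4` is the commutator of `t` and `y * t * y⁻¹`
  have hcomm : t * (y * t * y⁻¹) * t⁻¹ * (y * t * y⁻¹)⁻¹ = 1 := by
    calc t * (y * t * y⁻¹) * t⁻¹ * (y * t * y⁻¹)⁻¹
        = t * (y * t * y⁻¹) * (y * (y * t * y⁻¹) * y⁻¹) * (y * (y * (y * t * y⁻¹) * y⁻¹) * y⁻¹)
          * y ^ 4 := by rw [hinv, hy]; group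
      _ = 1 := by rw [← hty]; simp only [pow_succ, pow_zero, one_mul]; group
  rw [mul_inv_eq_one, mul_inv_eq_iff_eq_mul] at hcomm
  exact hcomm

end FourthPowers

def quarterTurn : ℤ × ℤ ≃+ ℤ × ℤ where
  toFun p := (-p.2, p.1)
  invFun p := (p.2, -p.1)
  left_inv p := by simp
  right_inv p := by simp
  map_add' p q := by simp [add_comm]

theorem quarterTurn_pow_four : (AddEquiv.toMultiplicative quarterTurn) ^ 4 = 1 := by
  ext p <;> simp [pow_succ, quarterTurn]

def quarterTurnAction : Multiplicative (ZMod 4) →* MulAut (Multiplicative (ℤ × ℤ)) :=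
  zmodPowersHom 4 _ quarterTurn_pow_four

theorem quarterTurnAction_ofAdd_one (m n : ℤ) :
    quarterTurnAction (ofAdd 1) (ofAdd (m, n)) = ofAdd (-n, m) := rfl

abbrev WallpaperP4 : Type := Multiplicative (ℤ × ℤ) ⋊[quarterTurnAction] Multiplicative (ZMod 4)

namespace WallpaperP4

def translation : WallpaperP4 := inl (ofAdd (1, 0))

def rot : WallpaperP4 := inr (ofAdd 1)

theorem closure_eq_top : Subgroup.closure {translation, rot} = ⊤ := by
  set S := Subgroup.closure {translation, rot}
  have ht : translation ∈ S := Subgroup.subset_closure (by simp)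
  have hy : rot ∈ S := Subgroup.subset_closure (by simp)
  have inl_mem (m n : ℤ) : (inl (ofAdd (m, n)) : WallpaperP4) ∈ S := by
    have : (inl (ofAdd (m, n)) : WallpaperP4) =
        translation ^ m * (rot * translation * rot⁻¹) ^ n := by
      rw [translation, rot, ← map_inv, ← inl_aut, ← MonoidHom.map_zpow, ← MonoidHom.map_zpow,
        ← map_mul]
      congr 1
      ext <;> simp [quarterTurnAction_ofAdd_one]
    rw [this]
    exact mul_mem (zpow_mem ht m) (zpow_mem (mul_mem (mul_mem hy ht) (inv_mem hy)) n)
  have inr_mem (σ : Multiplicative (ZMod 4)) : (inr σ : WallpaperP4) ∈ S := by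
    have : σ = ofAdd 1 ^ (toAdd σ).val := by
      rw [← ofAdd_nsmul, nsmul_one, ZMod.natCast_zmod_val, ofAdd_toAdd]
    rw [this, map_pow]
    exact pow_mem hy _
  refine eq_top_iff.2 fun x _ => ?_
  rw [← inl_left_mul_inr_right x]
  exact mul_mem (inl_mem _ _) (inr_mem _)

section Lift

variable {G : Type*} [Group G] {t y : G}

def lift (hy : y ^ 4 = 1) (hty : (t * y) ^ 4 = 1) (hyty : (y * t * y) ^ 2 = 1) :
    WallpaperP4 →* G :=
  SemidirectProduct.lift (commute_conj_of_pow_four hy hty hyty).zpowersHom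
    (zmodPowersHom 4 y hy) <| by
    set hcomm := commute_conj_of_pow_four hy hty hyty
    have conj_rot (p : Multiplicative (ℤ × ℤ)) :
        hcomm.zpowersHom (quarterTurnAction (ofAdd 1) p) = y * hcomm.zpowersHom p * y⁻¹ := by
      obtain ⟨⟨m, n⟩, rfl⟩ := ofAdd.surjective p
      rw [quarterTurnAction_ofAdd_one, hcomm.zpowersHom_ofAdd, hcomm.zpowersHom_ofAdd, ← conj_mul,
        ← conj_zpow, ← conj_zpow, conj_conj_eq_inv_of_pow_four hy hyty, inv_zpow, ← zpow_neg]
      exact (hcomm.zpow_zpow _ _).eq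
    have conj_rot_pow (k : ℕ) (p : Multiplicative (ℤ × ℤ)) :
        hcomm.zpowersHom ((quarterTurnAction (ofAdd 1) ^ k) p) =
          y ^ k * hcomm.zpowersHom p * (y ^ k)⁻¹ := by
      induction k generalizing p with
      | zero => simp
      | succ k ih => rw [pow_succ, MulAut.mul_apply, ih, conj_rot]; group
    intro σ
    ext p
    -- `quarterTurnAction σ` is by definition the `(toAdd σ).val`-th power of the quarter turn
    exact conj_rot_pow (toAdd σ).val p

theorem lift_translation (hy : y ^ 4 = 1) (hty : (t * y) ^ 4 = 1) (hyty : (y * t * y) ^ 2 = 1) :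
    lift hy hty hyty translation = t := by
  rw [lift, translation, SemidirectProduct.lift_inl, Commute.zpowersHom_ofAdd, zpow_one, zpow_zero,
    mul_one]

theorem lift_rot (hy : y ^ 4 = 1) (hty : (t * y) ^ 4 = 1) (hyty : (y * t * y) ^ 2 = 1) :
    lift hy hty hyty rot = y := by
  rw [lift, rot, SemidirectProduct.lift_inr, zmodPowersHom_apply]
  exact pow_one y

end Lift

end WallpaperP4

section VonDyck

variable {p q r : ℕ}

theorem vonDyck_of_zero_pow : (PresentedGroup.of 0 : PresentedGroup (vonDyckRels p q r)) ^ p = 1 :=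
  PresentedGroup.one_of_mem (by simp [vonDyckRels])

theorem vonDyck_of_one_pow : (PresentedGroup.of 1 : PresentedGroup (vonDyckRels p q r)) ^ q = 1 :=
  PresentedGroup.one_of_mem (by simp [vonDyckRels])

theorem vonDyck_of_two_pow : (PresentedGroup.of 2 : PresentedGroup (vonDyckRels p q r)) ^ r = 1 :=
  PresentedGroup.one_of_mem (by simp [vonDyckRels])

theorem vonDyck_of_mul_of_mul_of :
    (PresentedGroup.of 0 * PresentedGroup.of 1 * PresentedGroup.of 2 :
      PresentedGroup (vonDyckRels p q r)) = 1 :=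
  PresentedGroup.one_of_mem (by simp [vonDyckRels])

theorem vonDyck_of_zero_eq :
    (PresentedGroup.of 0 : PresentedGroup (vonDyckRels 2 q r)) =
      PresentedGroup.of 1 * PresentedGroup.of 2 := by
  calc PresentedGroup.of 0 = (PresentedGroup.of 0 : PresentedGroup (vonDyckRels 2 q r))⁻¹ :=
        (inv_eq_of_mul_eq_one_right (by rw [← sq]; exact vonDyck_of_zero_pow)).symm
    _ = PresentedGroup.of 1 * PresentedGroup.of 2 :=
        (eq_inv_of_mul_eq_one_right (by rw [← mul_assoc]; exact vonDyck_of_mul_of_mul_of)).symm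

def vonDyckLift {G : Type*} [Group G] (x y z : G) (hx : x ^ p = 1) (hy : y ^ q = 1)
    (hz : z ^ r = 1) (hxyz : x * y * z = 1) : PresentedGroup (vonDyckRels p q r) →* G :=
  PresentedGroup.toGroup (f := ![x, y, z]) <| by
    rintro _ (rfl | rfl | rfl | rfl) <;> simpa

end VonDyck

namespace WallpaperP4

def ofVonDyck : PresentedGroup (vonDyckRels 2 4 4) →* WallpaperP4 :=
  vonDyckLift (rot * (translation * rot)) rot (translation * rot) rfl rfl rfl rfl

def toVonDyck : WallpaperP4 →* PresentedGroup (vonDyckRels 2 4 4) :=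
  lift (t := .of 2 * (.of 1)⁻¹) vonDyck_of_one_pow
    (by rw [inv_mul_cancel_right]; exact vonDyck_of_two_pow)
    (by rw [mul_assoc, inv_mul_cancel_right, ← vonDyck_of_zero_eq]; exact vonDyck_of_zero_pow)

theorem toVonDyck_comp_ofVonDyck : toVonDyck.comp ofVonDyck = .id _ := by
  refine PresentedGroup.ext fun i => ?_
  fin_cases i <;>
    simp [ofVonDyck, vonDyckLift, toVonDyck, lift_rot, lift_translation, vonDyck_of_zero_eq]

theorem ofVonDyck_comp_toVonDyck : ofVonDyck.comp toVonDyck = .id _ := by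
  refine MonoidHom.eq_of_eqOn_dense closure_eq_top ?_
  rintro _ (rfl | rfl) <;> simp [ofVonDyck, vonDyckLift, toVonDyck, lift_rot, lift_translation]

def vonDyckEquiv : PresentedGroup (vonDyckRels 2 4 4) ≃* WallpaperP4 :=
  ofVonDyck.toMulEquiv toVonDyck toVonDyck_comp_ofVonDyck ofVonDyck_comp_toVonDyck

theorem hasPropertyA : HasPropertyA WallpaperP4 :=
  SemidirectProduct.hasPropertyA_of_closure_eq_top _ _ closure_eq_top

end WallpaperP4

theorem vonDyck_244_propertyA : HasPropertyA (PresentedGroup (vonDyckRels 2 4 4)) :=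
  WallpaperP4.hasPropertyA.of_mulEquiv WallpaperP4.vonDyckEquiv.symm
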